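/- If v > 2k and there exists a (K_v,S_k)-design with a vertex x that is not the center of any block, then there also exists a (K_v,S_k)-design in which every vertex is the center of at least one block. -/

import Mathlib

open SimpleGraph

/-- The complete graph on the set `s` of natural numbers, viewed as a graph on `ℕ`. -/
def Kon (s : Set ℕ) : SimpleGraph ℕ where
  Adj x y := x ≠ y ∧ x ∈ s ∧ y ∈ s
  symm := ⟨fun x y ⟨h, hx, hy⟩ => ⟨h.symm, hy, hx⟩⟩
  loopless := ⟨fun x h => h.1 rfl⟩

/-- `B` is a copy of `Γ`: there is an injection of vertices under which the
edges of `B` are exactly the images of the edges of `Γ`. -/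
def IsCopy {α β : Type*} (Γ : SimpleGraph α) (B : SimpleGraph β) : Prop :=
  ∃ φ : α ↪ β, ∀ x y : β, B.Adj x y ↔ ∃ a b, Γ.Adj a b ∧ φ a = x ∧ φ b = y

/-- A `(G, Γ)`-design: a set of copies of `Γ`, each a subgraph of `G` with
nonempty edge set, whose edge sets partition the edge set of `G`. -/
def IsDesign {α β : Type*} (G : SimpleGraph β) (Γ : SimpleGraph α)
    (D : Set (SimpleGraph β)) : Prop :=
  (∀ B ∈ D, B ≤ G ∧ IsCopy Γ B ∧ B.edgeSet.Nonempty) ∧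
  ∀ e ∈ G.edgeSet, ∃! B, B ∈ D ∧ e ∈ B.edgeSet

/-- A down-link from the design `D` to the design `D'`: each block is mapped
to a subgraph of itself. -/
def IsDownlink {β : Type*} (D D' : Set (SimpleGraph β))
    (f : SimpleGraph β → SimpleGraph β) : Prop :=
  ∀ B ∈ D, f B ∈ D' ∧ f B ≤ B

/-- The star `S_k = K_{1,k}`: vertex `0` is the center. -/
def starGraph (k : ℕ) : SimpleGraph (Fin (k + 1)) where
  Adj x y := x ≠ y ∧ (x = 0 ∨ y = 0)
  symm := ⟨fun x y ⟨h, ho⟩ => ⟨h.symm, ho.symm⟩⟩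
  loopless := ⟨fun x h => h.1 rfl⟩

/-- `c` is the center of the star block `B`. -/
def IsStarCenter (B : SimpleGraph ℕ) (c : ℕ) : Prop :=
  B.edgeSet.Nonempty ∧ ∀ e ∈ B.edgeSet, c ∈ e

/-!
Since `x` is the centre of no block, each edge `xc` lies in a star `B_c` centred at `c`. These
`v - 1` stars cover only `(v - 1)k < v(v - 1)/2` edges, so some block `S(c, Z)` is none of them,
and then `x ∉ Z ∪ {c}`. Reverse the edges `cz` and `zx` for `z ∈ Z`: replace `S(c, Z)` and the
`B_z` by the star on `x` with leaves `Z` and, for each `z ∈ Z`, the star `B_z` with its leaf `x`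
exchanged for `c`. These cover the same edges, each once; now `x` and every `z ∈ Z` are centres,
and every other `B_y` is untouched.
-/

def starOn (c : ℕ) (L : Finset ℕ) : SimpleGraph ℕ where
  Adj x y := x ≠ y ∧ ((x = c ∧ y ∈ L) ∨ (y = c ∧ x ∈ L))
  symm := ⟨fun _ _ ⟨h, ho⟩ => ⟨h.symm, ho.symm⟩⟩
  loopless := ⟨fun _ h => h.1 rfl⟩

section Star

variable {c x y : ℕ} {L : Finset ℕ}

@[simp]
lemma starOn_adj : (starOn c L).Adj x y ↔ x ≠ y ∧ ((x = c ∧ y ∈ L) ∨ (y = c ∧ x ∈ L)) :=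
  Iff.rfl

lemma starOn_adj_of_mem (hc : c ∉ L) (hy : y ∈ L) : (starOn c L).Adj c y :=
  ⟨fun h => hc (h ▸ hy), .inl ⟨rfl, hy⟩⟩

lemma isStarCenter_starOn (hc : c ∉ L) (hL : L.Nonempty) : IsStarCenter (starOn c L) c := by
  obtain ⟨l, hl⟩ := hL
  refine ⟨⟨s(c, l), starOn_adj_of_mem hc hl⟩, fun e he => ?_⟩
  induction e using Sym2.ind with
  | _ a b => rcases he.2 with ⟨rfl, -⟩ | ⟨rfl, -⟩ <;> simp

lemma starOn_le_iff {H : SimpleGraph ℕ} : starOn c L ≤ H ↔ ∀ l ∈ L, l ≠ c → H.Adj c l := by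
  refine ⟨fun h l hl hlc => h ⟨hlc.symm, .inl ⟨rfl, hl⟩⟩, ?_⟩
  rintro h a b ⟨hab, ⟨rfl, hb⟩ | ⟨rfl, ha⟩⟩
  exacts [h b hb (Ne.symm hab), (h a ha hab).symm]

lemma starOn_adj_iff_exists {k : ℕ} (φ : Fin (k + 1) ↪ ℕ) :
    (starOn (φ 0) (Finset.univ.image (φ ∘ Fin.succ))).Adj x y ↔
      ∃ a b, (_root_.starGraph k).Adj a b ∧ φ a = x ∧ φ b = y := by
  simp only [starOn_adj, Finset.mem_image, Finset.mem_univ, true_and, Function.comp_apply]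
  constructor
  · rintro ⟨hxy, ⟨rfl, i, rfl⟩ | ⟨rfl, i, rfl⟩⟩
    exacts [⟨0, i.succ, ⟨(Fin.succ_ne_zero i).symm, .inl rfl⟩, rfl, rfl⟩,
      ⟨i.succ, 0, ⟨Fin.succ_ne_zero i, .inr rfl⟩, rfl, rfl⟩]
  · rintro ⟨a, b, ⟨hab, rfl | rfl⟩, rfl, rfl⟩
    · obtain ⟨j, rfl⟩ := Fin.exists_succ_eq.2 hab.symm
      exact ⟨φ.injective.ne hab, .inl ⟨rfl, j, rfl⟩⟩
    · obtain ⟨j, rfl⟩ := Fin.exists_succ_eq.2 hab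
      exact ⟨φ.injective.ne hab, .inr ⟨rfl, j, rfl⟩⟩

lemma isCopy_starGraph_iff {k : ℕ} {B : SimpleGraph ℕ} :
    IsCopy (_root_.starGraph k) B ↔ ∃ c L, c ∉ L ∧ L.card = k ∧ B = starOn c L := by
  constructor
  · rintro ⟨φ, hφ⟩
    refine ⟨φ 0, Finset.univ.image (φ ∘ Fin.succ), ?_, ?_, ?_⟩
    · simp only [Finset.mem_image, Finset.mem_univ, true_and, Function.comp_apply, not_exists]
      exact fun i h => Fin.succ_ne_zero i (φ.injective h)
    · rw [Finset.card_image_of_injective _ (φ.injective.comp (Fin.succ_injective k))]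
      simp
    · ext x y
      rw [hφ, starOn_adj_iff_exists]
  · rintro ⟨c, L, hc, hL, rfl⟩
    let φ : Fin (k + 1) ↪ ℕ := ⟨Fin.cons c (L.orderEmbOfFin hL), Fin.cons_injective_iff.2
      ⟨by rwa [Finset.range_orderEmbOfFin], (L.orderEmbOfFin hL).injective⟩⟩
    have hφ : Finset.univ.image (φ ∘ Fin.succ) = L := by
      simp [φ, L.image_orderEmbOfFin_univ hL]
    refine ⟨φ, fun x y => ?_⟩
    rw [← starOn_adj_iff_exists, hφ]
    rfl

end Star

section Design

variable {α β : Type*} {G : SimpleGraph β} {Γ : SimpleGraph α} {D R A : Set (SimpleGraph β)}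

lemma IsDesign.exists_adj (hD : IsDesign G Γ D) {a b : β} (h : G.Adj a b) :
    ∃ B ∈ D, B.Adj a b :=
  (hD.2 s(a, b) h).exists

lemma IsDesign.eq_of_adj (hD : IsDesign G Γ D) {B B' : SimpleGraph β} (hB : B ∈ D) (hB' : B' ∈ D)
    {a b : β} (h : B.Adj a b) (h' : B'.Adj a b) : B = B' :=
  (hD.2 s(a, b) ((hD.1 B hB).1 h)).unique ⟨hB, h⟩ ⟨hB', h'⟩

lemma isDesign_sSup (hA : ∀ B ∈ A, IsCopy Γ B ∧ B.edgeSet.Nonempty)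
    (hdisj : ∀ B ∈ A, ∀ B' ∈ A, ∀ a b, B.Adj a b → B'.Adj a b → B = B') :
    IsDesign (sSup A) Γ A := by
  refine ⟨fun B hB => ⟨le_sSup hB, hA B hB⟩, fun e he => ?_⟩
  induction e using Sym2.ind with
  | _ a b =>
    obtain ⟨B, hB, hab⟩ := sSup_adj.1 he
    exact ⟨B, ⟨hB, hab⟩, fun B' ⟨hB', h'⟩ => hdisj B' hB' B hB a b h' hab⟩

lemma IsDesign.replace (hD : IsDesign G Γ D) (hR : R ⊆ D) (hA : IsDesign (sSup R) Γ A) :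
    IsDesign G Γ (D \ R ∪ A) := by
  refine ⟨?_, fun e he => ?_⟩
  · rintro B (hB | hB)
    · exact hD.1 B hB.1
    · exact ⟨(hA.1 B hB).1.trans (sSup_le fun B hB => (hD.1 B (hR hB)).1), (hA.1 B hB).2⟩
  obtain ⟨B, ⟨hB, heB⟩, huniq⟩ := hD.2 e he
  have hmem_R : ∀ B' ∈ A, e ∈ B'.edgeSet → B ∈ R := by
    intro B' hB' heB'
    obtain ⟨-, ⟨B'', hB'', rfl⟩, heB''⟩ :=
      edgeSet_sSup ▸ edgeSet_subset_edgeSet.2 (hA.1 B' hB').1 heB'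
    exact huniq B'' ⟨hR hB'', heB''⟩ ▸ hB''
  by_cases hBR : B ∈ R
  · obtain ⟨B', ⟨hB', heB'⟩, huniq'⟩ := hA.2 e (edgeSet_subset_edgeSet.2 (le_sSup hBR) heB)
    refine ⟨B', ⟨.inr hB', heB'⟩, ?_⟩
    rintro B'' ⟨hB'' | hB'', heB''⟩
    · exact absurd (huniq B'' ⟨hB''.1, heB''⟩ ▸ hBR) hB''.2
    · exact huniq' B'' ⟨hB'', heB''⟩
  · refine ⟨B, ⟨.inl ⟨hB, hBR⟩, heB⟩, ?_⟩
    rintro B'' ⟨hB'' | hB'', heB''⟩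
    · exact huniq B'' ⟨hB''.1, heB''⟩
    · exact absurd (hmem_R B'' hB'' heB'') hBR

end Design

section Switch

variable {k x c : ℕ} {Z : Finset ℕ} {L : ℕ → Finset ℕ}

def switchedOut (c : ℕ) (Z : Finset ℕ) (L : ℕ → Finset ℕ) : Set (SimpleGraph ℕ) :=
  insert (starOn c Z) ((fun z => starOn z (L z)) '' Z)

def switchedIn (x c : ℕ) (Z : Finset ℕ) (L : ℕ → Finset ℕ) : Set (SimpleGraph ℕ) :=
  insert (starOn x Z) ((fun z => starOn z (insert c ((L z).erase x))) '' Z)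

lemma sSup_switchedIn (hxL : ∀ z ∈ Z, x ∈ L z) :
    sSup (switchedIn x c Z L) = sSup (switchedOut c Z L) := by
  refine le_antisymm (sSup_le ?_) (sSup_le ?_)
  · rintro B (rfl | ⟨z, hz, rfl⟩) <;> rw [starOn_le_iff]
    · intro l hl hlx
      exact sSup_adj.2 ⟨_, .inr ⟨l, hl, rfl⟩, ⟨hlx.symm, .inr ⟨rfl, hxL l hl⟩⟩⟩
    · intro l hl hlz
      rcases Finset.mem_insert.1 hl with rfl | hl
      · exact sSup_adj.2 ⟨_, .inl rfl, ⟨hlz.symm, .inr ⟨rfl, hz⟩⟩⟩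
      · exact sSup_adj.2 ⟨_, .inr ⟨z, hz, rfl⟩, ⟨hlz.symm, .inl ⟨rfl, (Finset.mem_erase.1 hl).2⟩⟩⟩
  · rintro B (rfl | ⟨z, hz, rfl⟩) <;> rw [starOn_le_iff]
    · intro l hl hlc
      exact sSup_adj.2 ⟨_, .inr ⟨l, hl, rfl⟩, ⟨hlc.symm, .inr ⟨rfl, Finset.mem_insert_self _ _⟩⟩⟩
    · intro l hl hlz
      by_cases hlx : l = x
      · subst hlx
        exact sSup_adj.2 ⟨_, .inl rfl, ⟨hlz.symm, .inr ⟨rfl, hz⟩⟩⟩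
      · exact sSup_adj.2 ⟨_, .inr ⟨z, hz, rfl⟩,
          ⟨hlz.symm, .inl ⟨rfl, Finset.mem_insert_of_mem (Finset.mem_erase.2 ⟨hlx, hl⟩)⟩⟩⟩

lemma switchedIn_eq_of_adj (hxZ : x ∉ Z) (hcZ : c ∉ Z) (hxc : x ≠ c)
    (horient : ∀ z ∈ Z, ∀ z' ∈ Z, z' ∈ L z → z ∉ L z') :
    ∀ B ∈ switchedIn x c Z L, ∀ B' ∈ switchedIn x c Z L, ∀ a b,
      B.Adj a b → B'.Adj a b → B = B' := by
  set N := fun z => starOn z (insert c ((L z).erase x))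
  have hN_adj_x {z : ℕ} (hz : z ∈ Z) (y : ℕ) : ¬(N z).Adj x y := by
    rintro ⟨-, ⟨rfl, -⟩ | ⟨rfl, hx⟩⟩
    · exact hxZ hz
    · simp [hxc] at hx
  have hN_disjoint {z : ℕ} (hz : z ∈ Z) {a b : ℕ} (h : (starOn x Z).Adj a b) : ¬(N z).Adj a b := by
    rcases h with ⟨-, ⟨rfl, -⟩ | ⟨rfl, -⟩⟩
    exacts [hN_adj_x hz b, fun h => hN_adj_x hz a h.symm]
  have hmem_L {z z' : ℕ} (hz' : z' ∈ Z) (h : z' ∈ insert c ((L z).erase x)) : z' ∈ L z := by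
    rcases Finset.mem_insert.1 h with rfl | h
    exacts [absurd hz' hcZ, (Finset.mem_erase.1 h).2]
  have hN_unique {z z' : ℕ} (hz : z ∈ Z) (hz' : z' ∈ Z) {a b : ℕ} (h : (N z).Adj a b)
      (h' : (N z').Adj a b) : z = z' := by
    by_contra hne
    rcases h with ⟨-, ⟨rfl, h⟩ | ⟨rfl, h⟩⟩ <;> rcases h' with ⟨-, ⟨rfl, h'⟩ | ⟨rfl, h'⟩⟩
    exacts [hne rfl, horient _ hz _ hz' (hmem_L hz' h) (hmem_L hz h'),
      horient _ hz _ hz' (hmem_L hz' h) (hmem_L hz h'), hne rfl]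
  rintro B (rfl | ⟨z, hz, rfl⟩) B' (rfl | ⟨z', hz', rfl⟩) a b h h'
  · rfl
  · exact absurd h' (hN_disjoint hz' h)
  · exact absurd h (hN_disjoint hz h')
  · exact congrArg N (hN_unique hz hz' h h')

lemma self_notMem_insert_erase {z : ℕ} (hcZ : c ∉ Z) (hz : z ∈ Z) (hzL : z ∉ L z) :
    z ∉ insert c ((L z).erase x) := by
  simp [hzL, show z ≠ c from fun h => hcZ (h ▸ hz)]

lemma forall_isStarCenter_switchedIn (hZ : Z.Nonempty) (hxZ : x ∉ Z) (hcZ : c ∉ Z)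
    (hzL : ∀ z ∈ Z, z ∉ L z) : ∀ y ∈ insert x Z, ∃ B ∈ switchedIn x c Z L, IsStarCenter B y := by
  intro y hy
  rcases Finset.mem_insert.1 hy with rfl | hy
  · exact ⟨_, .inl rfl, isStarCenter_starOn hxZ hZ⟩
  · exact ⟨_, .inr ⟨y, hy, rfl⟩,
      isStarCenter_starOn (self_notMem_insert_erase hcZ hy (hzL y hy)) (Finset.insert_nonempty _ _)⟩

lemma starOn_notMem_switchedOut {y : ℕ} {M : Finset ℕ} (hxZ : x ∉ Z) (hxc : x ≠ c)
    (hyZ : y ∉ Z) (hyM : y ∉ M) (hxM : x ∈ M) : starOn y M ∉ switchedOut c Z L := by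
  have hadj := starOn_adj_of_mem hyM hxM
  rintro (h | ⟨z, hz, h⟩)
  · rw [h] at hadj
    rcases hadj.2 with ⟨rfl, hx⟩ | ⟨rfl, -⟩
    exacts [hxZ hx, hxc rfl]
  · rw [← h] at hadj
    rcases hadj.2 with ⟨rfl, -⟩ | ⟨rfl, -⟩
    exacts [hyZ hz, hxZ hz]

lemma isDesign_switchedIn (hZk : Z.card = k) (hZ : Z.Nonempty) (hxZ : x ∉ Z) (hcZ : c ∉ Z)
    (hxc : x ≠ c) (hzL : ∀ z ∈ Z, z ∉ L z) (hxL : ∀ z ∈ Z, x ∈ L z) (hcL : ∀ z ∈ Z, c ∉ L z)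
    (hLk : ∀ z ∈ Z, (L z).card = k) (horient : ∀ z ∈ Z, ∀ z' ∈ Z, z' ∈ L z → z ∉ L z') :
    IsDesign (sSup (switchedOut c Z L)) (_root_.starGraph k) (switchedIn x c Z L) := by
  rw [← sSup_switchedIn hxL]
  refine isDesign_sSup ?_ (switchedIn_eq_of_adj hxZ hcZ hxc horient)
  rintro B (rfl | ⟨z, hz, rfl⟩)
  · exact ⟨isCopy_starGraph_iff.2 ⟨x, Z, hxZ, hZk, rfl⟩, (isStarCenter_starOn hxZ hZ).1⟩
  · have hz_not := self_notMem_insert_erase (x := x) hcZ hz (hzL z hz)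
    have hcard : (insert c ((L z).erase x)).card = k := by
      rw [Finset.card_insert_of_notMem fun h => hcL z hz (Finset.mem_erase.1 h).2,
        Finset.card_erase_add_one (hxL z hz), hLk z hz]
    exact ⟨isCopy_starGraph_iff.2 ⟨z, _, hz_not, hcard, rfl⟩,
      (isStarCenter_starOn hz_not (Finset.insert_nonempty _ _)).1⟩

end Switch

lemma sub_one_mul_lt_choose_two {n k : ℕ} (hk : 0 < k) (h : 2 * k < n) :
    (n - 1) * k < n.choose 2 := by
  rw [Nat.choose_two_right, Nat.lt_div_iff_mul_lt' (Nat.even_mul_pred_self n).two_dvd]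
  calc 2 * ((n - 1) * k) = (n - 1) * (2 * k) := by ring
    _ < (n - 1) * n := Nat.mul_lt_mul_of_pos_left h (by omega)
    _ = n * (n - 1) := mul_comm _ _

lemma exists_kon_adj_forall_not_starOn_adj {k : ℕ} {S T : Finset ℕ} (L : ℕ → Finset ℕ)
    (hL : ∀ c ∈ T, (L c).card ≤ k) (hT : T.card * k < S.card.choose 2) :
    ∃ a b, (Kon S).Adj a b ∧ ∀ c ∈ T, ¬(starOn c (L c)).Adj a b := by
  set covered := T.biUnion fun c => (L c).image (s(c, ·))
  have hcard : covered.card < (S.offDiag.image Sym2.mk.uncurry).card :=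
    calc covered.card ≤ ∑ c ∈ T, ((L c).image (s(c, ·))).card := Finset.card_biUnion_le
      _ ≤ ∑ _c ∈ T, k := Finset.sum_le_sum fun c hc => Finset.card_image_le.trans (hL c hc)
      _ < _ := by rwa [Finset.sum_const, smul_eq_mul, Sym2.card_image_offDiag]
  obtain ⟨e, he, he_not⟩ := Finset.exists_mem_notMem_of_card_lt_card hcard
  obtain ⟨⟨a, b⟩, hab, rfl⟩ := Finset.mem_image.1 he
  obtain ⟨ha, hb, hab⟩ := Finset.mem_offDiag.1 hab
  refine ⟨a, b, ⟨hab, ha, hb⟩, fun c hc hadj => he_not (Finset.mem_biUnion.2 ⟨c, hc, ?_⟩)⟩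
  rcases hadj with ⟨-, ⟨rfl, hb⟩ | ⟨rfl, ha⟩⟩
  exacts [Finset.mem_image_of_mem _ hb, Finset.mem_image.2 ⟨a, ha, Sym2.eq_swap⟩]

section StarDesign

variable {k x : ℕ} {S : Finset ℕ} {D : Set (SimpleGraph ℕ)}

lemma IsDesign.notMem_of_starOn_mem {α : Type*} {G : SimpleGraph ℕ} {Γ : SimpleGraph α}
    (hD : IsDesign G Γ D) {z z' : ℕ} {M M' : Finset ℕ} (hB : starOn z M ∈ D)
    (hB' : starOn z' M' ∈ D) (hzM : z ∉ M) (hzM' : z' ∉ M') (hxM : x ∈ M) (hxz' : x ≠ z')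
    (h : z' ∈ M) : z ∉ M' := by
  intro h'
  have hBB' := hD.eq_of_adj hB hB' (starOn_adj_of_mem hzM h) (starOn_adj_of_mem hzM' h').symm
  have hadj := starOn_adj_of_mem hzM hxM
  rw [hBB'] at hadj
  rcases hadj.2 with ⟨rfl, -⟩ | ⟨rfl, -⟩
  exacts [hzM' h', hxz' rfl]

lemma IsDesign.exists_starOn_of_not_isStarCenter (hD : IsDesign (Kon S) (_root_.starGraph k) D)
    (hx : ∀ B ∈ D, ¬IsStarCenter B x) (hxS : x ∈ S) {c : ℕ} (hc : c ∈ S.erase x) :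
    ∃ L, x ∈ L ∧ c ∉ L ∧ L.card = k ∧ starOn c L ∈ D := by
  have hcx : (Kon S).Adj c x := ⟨Finset.ne_of_mem_erase hc, Finset.mem_of_mem_erase hc, hxS⟩
  obtain ⟨B, hB, hadj⟩ := hD.exists_adj hcx
  obtain ⟨c', L, hc'L, hLk, rfl⟩ := isCopy_starGraph_iff.1 (hD.1 _ hB).2.1
  rcases hadj.2 with ⟨rfl, hxL⟩ | ⟨rfl, hcL⟩
  · exact ⟨L, hxL, hc'L, hLk, hB⟩
  · exact absurd (isStarCenter_starOn hc'L ⟨c, hcL⟩) (hx _ hB)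

lemma IsDesign.exists_starOn_avoiding (hD : IsDesign (Kon S) (_root_.starGraph k) D) (hk : 0 < k)
    (hS : 2 * k < S.card) (hxS : x ∈ S) (hx : ∀ B ∈ D, ¬IsStarCenter B x) (L : ℕ → Finset ℕ)
    (hL : ∀ c ∈ S.erase x, x ∈ L c ∧ c ∉ L c ∧ (L c).card = k ∧ starOn c (L c) ∈ D) :
    ∃ c Z, c ∉ Z ∧ Z.card = k ∧ starOn c Z ∈ D ∧ x ≠ c ∧ x ∉ Z ∧
      ∀ z ∈ Z, z ∈ S.erase x ∧ c ∉ L z := by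
  obtain ⟨a, b, hab, hnot⟩ := exists_kon_adj_forall_not_starOn_adj (S := S) L
    (fun c hc => (hL c hc).2.2.1.le)
    (by rw [Finset.card_erase_of_mem hxS]; exact sub_one_mul_lt_choose_two hk hS)
  obtain ⟨B, hB, hBab⟩ := hD.exists_adj hab
  obtain ⟨c, Z, hcZ, hZk, rfl⟩ := isCopy_starGraph_iff.1 (hD.1 B hB).2.1
  have hne : ∀ y ∈ S.erase x, starOn c Z ≠ starOn y (L y) := fun y hy h => hnot y hy (h ▸ hBab)
  obtain ⟨z₀, hz₀⟩ := Finset.card_pos.1 (hZk ▸ hk)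
  have hZS : ∀ z ∈ Z, c ∈ S ∧ z ∈ S := fun z hz => ((hD.1 _ hB).1 (starOn_adj_of_mem hcZ hz)).2
  have hxc : x ≠ c := fun h => hx _ hB (by rw [h]; exact isStarCenter_starOn hcZ ⟨z₀, hz₀⟩)
  have hc : c ∈ S.erase x := Finset.mem_erase.2 ⟨hxc.symm, (hZS z₀ hz₀).1⟩
  have hxZ : x ∉ Z := fun h => hne c hc <| hD.eq_of_adj hB (hL c hc).2.2.2
    (starOn_adj_of_mem hcZ h) (starOn_adj_of_mem (hL c hc).2.1 (hL c hc).1)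
  refine ⟨c, Z, hcZ, hZk, hB, hxc, hxZ, fun z hz => ?_⟩
  have hzS : z ∈ S.erase x := Finset.mem_erase.2 ⟨fun h => hxZ (h ▸ hz), (hZS z hz).2⟩
  exact ⟨hzS, fun h => hne z hzS <| hD.eq_of_adj hB (hL z hzS).2.2.2
    (starOn_adj_of_mem hcZ hz).symm (starOn_adj_of_mem (hL z hzS).2.1 h)⟩

theorem IsDesign.exists_forall_isStarCenter (hD : IsDesign (Kon S) (_root_.starGraph k) D)
    (hk : 0 < k) (hS : 2 * k < S.card) (hxS : x ∈ S) (hx : ∀ B ∈ D, ¬IsStarCenter B x) :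
    ∃ D', IsDesign (Kon S) (_root_.starGraph k) D' ∧ ∀ y ∈ S, ∃ B ∈ D', IsStarCenter B y := by
  choose! L hL using fun c (hc : c ∈ S.erase x) => hD.exists_starOn_of_not_isStarCenter hx hxS hc
  obtain ⟨c, Z, hcZ, hZk, hB, hxc, hxZ, hZ⟩ := hD.exists_starOn_avoiding hk hS hxS hx L hL
  have hZne : Z.Nonempty := Finset.card_pos.1 (hZk ▸ hk)
  have hxL z (hz : z ∈ Z) := (hL z (hZ z hz).1).1
  have hzL z (hz : z ∈ Z) := (hL z (hZ z hz).1).2.1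
  have hLD z (hz : z ∈ Z) := (hL z (hZ z hz).1).2.2.2
  have hR : switchedOut c Z L ⊆ D := by
    rintro B (rfl | ⟨z, hz, rfl⟩)
    exacts [hB, hLD z hz]
  have horient : ∀ z ∈ Z, ∀ z' ∈ Z, z' ∈ L z → z ∉ L z' := fun z hz z' hz' =>
    hD.notMem_of_starOn_mem (hLD z hz) (hLD z' hz') (hzL z hz) (hzL z' hz') (hxL z hz)
      (fun h => hxZ (h ▸ hz'))
  have hD' := hD.replace hR <| isDesign_switchedIn hZk hZne hxZ hcZ hxc hzL hxL
    (fun z hz => (hZ z hz).2) (fun z hz => (hL z (hZ z hz).1).2.2.1) horient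
  refine ⟨_, hD', fun y hy => ?_⟩
  by_cases hy' : y ∈ insert x Z
  · obtain ⟨B, hB, hyB⟩ := forall_isStarCenter_switchedIn hZne hxZ hcZ hzL y hy'
    exact ⟨B, .inr hB, hyB⟩
  obtain ⟨hyx, hyZ⟩ : y ≠ x ∧ y ∉ Z := by simpa using hy'
  obtain ⟨hxLy, hyLy, -, hLDy⟩ := hL y (Finset.mem_erase.2 ⟨hyx, hy⟩)
  exact ⟨_, .inl ⟨hLDy, starOn_notMem_switchedOut hxZ hxc hyZ hyLy hxLy⟩,
    isStarCenter_starOn hyLy ⟨x, hxLy⟩⟩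

end StarDesign

/-- If `v > 2k` and some `(K_v,S_k)`-design has a vertex which is not the
center of any block, then some `(K_v,S_k)`-design has every vertex as the
center of at least one block. -/
theorem stmt9 (k v : ℕ) (hk : 3 < k) (hv : 2 * k < v)
    (h : ∃ D : Set (SimpleGraph ℕ), IsDesign (Kon (Set.Iio v)) (_root_.starGraph k) D ∧
      ∃ x ∈ Set.Iio v, ∀ B ∈ D, ¬ IsStarCenter B x) :
    ∃ D : Set (SimpleGraph ℕ), IsDesign (Kon (Set.Iio v)) (_root_.starGraph k) D ∧
      ∀ x ∈ Set.Iio v, ∃ B ∈ D, IsStarCenter B x := by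
  obtain ⟨D, hD, x, hxv, hx⟩ := h
  rw [← Finset.coe_range] at hD hxv ⊢
  exact hD.exists_forall_isStarCenter (by omega) (by rwa [Finset.card_range]) hxv hx
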